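/- arXiv:2210.10404 — 2 statements merged into one kernel-verified Lean document; each statement's English description precedes it below -/
import Mathlib

section
/- Call a T-periodic solution γ: [0,T) → (0,1)ⁿ of the RFM non-degenerate if no coordinate γᵢ is constant. Suppose n is odd and for every i ∈ {1,3,…,n-2} there exists αᵢ > 0 with uᵢ(t) = αᵢ u_{i+1}(t) for all t. If the T-periodic solution is non-degenerate, then R_P < R_C strictly. -/
/-!
Every site obeys the linear equation `ẋᵢ = aᵢ (1 - xᵢ) - bᵢ xᵢ` with `aᵢ = u_{i-1} x_{i-1}` and
`bᵢ = uᵢ (1 - x_{i+1})`. Integrating it, and the equation for `xᵢ²`, over a period and applying the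
strict Cauchy–Schwarz inequality with weight `aᵢ + bᵢ` to the non-constant `xᵢ` shows that the
common period flux `J = ∫ uₙ xₙ` satisfies `1/J > 1/∫aᵢ + 1/∫bᵢ`, whereas the equilibrium flux
`E = (∫ uₙ) eₙ` satisfies the corresponding identity with `∫ u_{i-1} e_{i-1}` and
`∫ uᵢ (1 - e_{i+1})`. If `J ≥ E`, the proportionality `uᵢ = αᵢ u_{i+1}` at odd `i` turns
`∫ u_{i+1} x_{i+1} > ∫ u_{i+1} e_{i+1}` into `∫ uᵢ (1 - x_{i+1}) ≤ ∫ uᵢ (1 - e_{i+1})`, hence into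
`∫ u_{i-1} x_{i-1} > ∫ u_{i-1} e_{i-1}`.
Descending from site `n` to site `1` yields `∫ u₀ > ∫ u₀`.
-/

open MeasureTheory intervalIntegral Real Filter

section PeriodicLinearODE

variable {T : ℝ} {a b w X : ℝ → ℝ}

theorem sq_integral_mul_lt_integral_mul_integral_mul_sq (hT : 0 < T) (hw : Continuous w)
    (hw_pos : ∀ t ∈ Set.Icc 0 T, 0 < w t) (hX : Continuous X)
    (hX_nonconst : ∀ c, ∃ t ∈ Set.Icc 0 T, X t ≠ c) :
    (∫ t in (0:ℝ)..T, w t * X t) ^ 2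
      < (∫ t in (0:ℝ)..T, w t) * ∫ t in (0:ℝ)..T, w t * X t ^ 2 := by
  set S := ∫ t in (0:ℝ)..T, w t
  set M := ∫ t in (0:ℝ)..T, w t * X t
  set Q := ∫ t in (0:ℝ)..T, w t * X t ^ 2
  have hS : 0 < S := intervalIntegral_pos_of_pos_on (hw.intervalIntegrable _ _)
    (fun t ht => hw_pos t (Set.Ioo_subset_Icc_self ht)) hT
  obtain ⟨t₀, ht₀, hXt₀⟩ := hX_nonconst (M / S)
  have hvar : 0 < ∫ t in (0:ℝ)..T, w t * (S * X t - M) ^ 2 := by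
    refine integral_pos hT (by fun_prop) (fun t ht => ?_) ⟨t₀, ht₀, ?_⟩
    · exact mul_nonneg (hw_pos t (Set.Ioc_subset_Icc_self ht)).le (sq_nonneg _)
    · refine mul_pos (hw_pos t₀ ht₀) (sq_pos_of_ne_zero fun h => hXt₀ ?_)
      rw [eq_div_iff hS.ne']
      linarith
  have hexpand : ∫ t in (0:ℝ)..T, w t * (S * X t - M) ^ 2 = S * (S * Q - M ^ 2) := by
    have h : ∀ t, w t * (S * X t - M) ^ 2
        = S ^ 2 * (w t * X t ^ 2) - 2 * S * M * (w t * X t) + M ^ 2 * w t := fun t => by ring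
    simp_rw [h]
    rw [intervalIntegral.integral_add, intervalIntegral.integral_sub,
      intervalIntegral.integral_const_mul, intervalIntegral.integral_const_mul,
      intervalIntegral.integral_const_mul]
    · ring
    all_goals exact Continuous.intervalIntegrable (by fun_prop) _ _
  rw [hexpand] at hvar
  nlinarith [(pos_iff_pos_of_mul_pos hvar).mp hS]

theorem integral_mul_one_sub_eq_integral_mul (ha : Continuous a) (hb : Continuous b)
    (hX : ∀ t, HasDerivAt X (a t * (1 - X t) - b t * X t) t) (hper : X T = X 0) :
    ∫ t in (0:ℝ)..T, a t * (1 - X t) = ∫ t in (0:ℝ)..T, b t * X t := by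
  have hXc : Continuous X := continuous_iff_continuousAt.2 fun t => (hX t).continuousAt
  have h := integral_eq_sub_of_hasDerivAt (fun t _ => hX t)
    (Continuous.intervalIntegrable (by fun_prop) 0 T)
  rw [hper, sub_self, intervalIntegral.integral_sub
    (Continuous.intervalIntegrable (by fun_prop) _ _)
    (Continuous.intervalIntegrable (by fun_prop) _ _)] at h
  exact sub_eq_zero.1 h

theorem integral_add_mul_sq_eq_integral_mul (ha : Continuous a) (hb : Continuous b)
    (hX : ∀ t, HasDerivAt X (a t * (1 - X t) - b t * X t) t) (hper : X T = X 0) :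
    ∫ t in (0:ℝ)..T, (a t + b t) * X t ^ 2 = ∫ t in (0:ℝ)..T, a t * X t := by
  have hXc : Continuous X := continuous_iff_continuousAt.2 fun t => (hX t).continuousAt
  have hX2 : ∀ t, HasDerivAt (fun s => X s ^ 2)
      (2 * (a t * X t) - 2 * ((a t + b t) * X t ^ 2)) t := fun t =>
    ((hX t).fun_pow 2).congr_deriv (by push_cast; ring)
  have h := integral_eq_sub_of_hasDerivAt (fun t _ => hX2 t)
    (Continuous.intervalIntegrable (by fun_prop) 0 T)
  rw [hper, sub_self, intervalIntegral.integral_sub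
    (Continuous.intervalIntegrable (by fun_prop) _ _)
    (Continuous.intervalIntegrable (by fun_prop) _ _), intervalIntegral.integral_const_mul,
    intervalIntegral.integral_const_mul] at h
  linarith

theorem integral_mul_one_sub_mul_add_lt (hT : 0 < T) (ha : Continuous a) (hb : Continuous b)
    (hab : ∀ t ∈ Set.Icc 0 T, 0 < a t + b t)
    (hX : ∀ t, HasDerivAt X (a t * (1 - X t) - b t * X t) t) (hper : X T = X 0)
    (hX_nonconst : ∀ c, ∃ t ∈ Set.Icc 0 T, X t ≠ c) :
    (∫ t in (0:ℝ)..T, a t * (1 - X t)) * ((∫ t in (0:ℝ)..T, a t) + ∫ t in (0:ℝ)..T, b t)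
      < (∫ t in (0:ℝ)..T, a t) * ∫ t in (0:ℝ)..T, b t := by
  have hXc : Continuous X := continuous_iff_continuousAt.2 fun t => (hX t).continuousAt
  have hint : ∀ f : ℝ → ℝ, Continuous f → IntervalIntegrable f volume 0 T :=
    fun f hf => hf.intervalIntegrable 0 T
  have hJ : ∫ t in (0:ℝ)..T, a t * (1 - X t)
      = (∫ t in (0:ℝ)..T, a t) - ∫ t in (0:ℝ)..T, a t * X t := by
    rw [← intervalIntegral.integral_sub (hint _ ha) (hint _ (by fun_prop))]
    exact integral_congr fun t _ => by ring
  have hM : ∫ t in (0:ℝ)..T, (a t + b t) * X t = ∫ t in (0:ℝ)..T, a t := by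
    simp only [add_mul]
    rw [intervalIntegral.integral_add (hint _ (by fun_prop)) (hint _ (by fun_prop)),
      ← integral_mul_one_sub_eq_integral_mul ha hb hX hper, hJ]
    ring
  have hcs := sq_integral_mul_lt_integral_mul_integral_mul_sq hT (by fun_prop) hab hXc hX_nonconst
  rw [hM, intervalIntegral.integral_add (hint _ ha) (hint _ hb),
    integral_add_mul_sq_eq_integral_mul ha hb hX hper] at hcs
  rw [hJ]
  nlinarith

end PeriodicLinearODE

theorem Function.Periodic.exists_mem_Icc_ne {β : Type*} {T : ℝ} {X : ℝ → β}
    (hX : Function.Periodic X T) (hT : 0 < T) (h : ¬ ∃ c, ∀ t, X t = c) (c : β) :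
    ∃ t ∈ Set.Icc 0 T, X t ≠ c := by
  push Not at h
  obtain ⟨t₁, ht₁⟩ := h c
  obtain ⟨t₀, ht₀, hX₀⟩ := hX.exists_mem_Ico₀ hT t₁
  exact ⟨t₀, Set.Ico_subset_Icc_self ht₀, hX₀ ▸ ht₁⟩

theorem integral_mul_one_sub_le_of_eq_const_mul {T α c : ℝ} {f g X : ℝ → ℝ} (hα : 0 ≤ α)
    (hfg : ∀ t, f t = α * g t) (hg : IntervalIntegrable g volume 0 T)
    (hgX : IntervalIntegrable (fun t => g t * X t) volume 0 T)
    (h : (∫ t in (0:ℝ)..T, g t) * c ≤ ∫ t in (0:ℝ)..T, g t * X t) :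
    ∫ t in (0:ℝ)..T, f t * (1 - X t) ≤ (∫ t in (0:ℝ)..T, f t) * (1 - c) := by
  have hf : ∫ t in (0:ℝ)..T, f t = α * ∫ t in (0:ℝ)..T, g t := by
    simp only [hfg, intervalIntegral.integral_const_mul]
  have hfX : ∫ t in (0:ℝ)..T, f t * (1 - X t)
      = α * ((∫ t in (0:ℝ)..T, g t) - ∫ t in (0:ℝ)..T, g t * X t) := by
    rw [← intervalIntegral.integral_sub hg hgX, ← intervalIntegral.integral_const_mul]
    exact integral_congr fun t _ => by simp only [hfg]; ring
  rw [hf, hfX]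
  nlinarith [mul_le_mul_of_nonneg_left h hα]

theorem lt_of_mul_add_lt_mul_of_mul_add_eq_mul {J E A B A' B' : ℝ} (hA : 0 < A) (hB : 0 < B)
    (hA' : 0 < A') (hB' : 0 < B') (hEJ : E ≤ J) (hBB' : B ≤ B')
    (hJ : J * (A + B) < A * B) (hE' : E * (A' + B') = A' * B') : A' < A := by
  -- in reciprocals: `1/A' = 1/E - 1/B' ≥ 1/J - 1/B > 1/A`
  by_contra! hAA'
  nlinarith [mul_pos hA hB, mul_pos hA' hB',
    mul_nonneg (mul_nonneg hA.le hA'.le) (sub_nonneg.mpr hBB'),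
    mul_nonneg (mul_nonneg hB.le hB'.le) (sub_nonneg.mpr hAA'),
    mul_le_mul_of_nonneg_right hEJ (by positivity : (0:ℝ) ≤ (A + B) * (A' + B'))]

theorem apply_eq_of_forall_lt_apply_eq_apply_succ {α : Type*} {F : ℕ → α} {n : ℕ}
    (h : ∀ i < n, F i = F (i + 1)) {i : ℕ} (hi : i ≤ n) : F i = F n :=
  Nat.decreasingInduction (motive := fun i _ => F i = F n) (fun k hk ih => (h k hk).trans ih)
    rfl hi

structure IsPeriodicRFMSolution (n : ℕ) (T : ℝ) (u x : ℕ → ℝ → ℝ) : Prop where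
  continuous_rate : ∀ i, i ≤ n → Continuous (u i)
  rate_pos : ∀ i, i ≤ n → ∀ t, 0 < u i t
  entry : ∀ t, x 0 t = 1
  exit : ∀ t, x (n + 1) t = 0
  differentiable : ∀ i, 1 ≤ i → i ≤ n → Differentiable ℝ (x i)
  periodic : ∀ i, 1 ≤ i → i ≤ n → Function.Periodic (x i) T
  mem_Ioo : ∀ i, 1 ≤ i → i ≤ n → ∀ t, x i t ∈ Set.Ioo (0:ℝ) 1
  deriv_eq : ∀ i, 1 ≤ i → i ≤ n → ∀ t,
    deriv (x i) t = u (i-1) t * x (i-1) t * (1 - x i t) - u i t * x i t * (1 - x (i+1) t)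

structure IsAveragedEquilibrium (n : ℕ) (T : ℝ) (u : ℕ → ℝ → ℝ) (e : ℕ → ℝ) : Prop where
  entry : e 0 = 1
  exit : e (n + 1) = 0
  mem_Ioo : ∀ i, 1 ≤ i → i ≤ n → e i ∈ Set.Ioo (0:ℝ) 1
  flux_eq : ∀ i, 1 ≤ i → i ≤ n →
    (1/T * ∫ t in (0:ℝ)..T, u (i-1) t) * e (i-1) * (1 - e i)
      = (1/T * ∫ t in (0:ℝ)..T, u i t) * e i * (1 - e (i+1))

namespace IsAveragedEquilibrium

variable {n : ℕ} {T : ℝ} {u : ℕ → ℝ → ℝ} {e : ℕ → ℝ}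

theorem pos (he : IsAveragedEquilibrium n T u e) {i : ℕ} (hi : i ≤ n) : 0 < e i := by
  rcases Nat.eq_zero_or_pos i with rfl | hi₀
  · simp [he.entry]
  · exact (he.mem_Ioo i hi₀ hi).1

theorem lt_one (he : IsAveragedEquilibrium n T u e) {i : ℕ} (hi₀ : 1 ≤ i) (hi : i ≤ n + 1) :
    e i < 1 := by
  rcases hi.eq_or_lt with rfl | hin
  · simp [he.exit]
  · exact (he.mem_Ioo i hi₀ (by omega)).2

theorem integral_flux_eq (he : IsAveragedEquilibrium n T u e) (hT : T ≠ 0) {i : ℕ} (hi : i ≤ n) :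
    (∫ t in (0:ℝ)..T, u i t) * e i * (1 - e (i + 1)) = (∫ t in (0:ℝ)..T, u n t) * e n := by
  rw [apply_eq_of_forall_lt_apply_eq_apply_succ (F := fun i =>
    (∫ t in (0:ℝ)..T, u i t) * e i * (1 - e (i + 1))) (fun k hk => ?_) hi]
  · simp only [he.exit, sub_zero, mul_one]
  · have h := he.flux_eq (k + 1) (by omega) hk
    simp only [Nat.add_sub_cancel] at h
    exact mul_left_cancel₀ (one_div_ne_zero hT) (by linear_combination h)

end IsAveragedEquilibrium

namespace IsPeriodicRFMSolution

variable {n : ℕ} {T : ℝ} {u x : ℕ → ℝ → ℝ} {e : ℕ → ℝ}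

theorem continuous (hs : IsPeriodicRFMSolution n T u x) {i : ℕ} (hi : i ≤ n + 1) :
    Continuous (x i) := by
  rcases Nat.eq_zero_or_pos i with rfl | hi₀
  · rw [funext hs.entry]; exact continuous_const
  rcases hi.eq_or_lt with rfl | hin
  · rw [funext hs.exit]; exact continuous_const
  · exact (hs.differentiable i hi₀ (by omega)).continuous

theorem pos (hs : IsPeriodicRFMSolution n T u x) {i : ℕ} (hi : i ≤ n) (t : ℝ) : 0 < x i t := by
  rcases Nat.eq_zero_or_pos i with rfl | hi₀
  · simp [hs.entry]
  · exact (hs.mem_Ioo i hi₀ hi t).1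

theorem lt_one (hs : IsPeriodicRFMSolution n T u x) {i : ℕ} (hi₀ : 1 ≤ i) (hi : i ≤ n + 1)
    (t : ℝ) : x i t < 1 := by
  rcases hi.eq_or_lt with rfl | hin
  · simp [hs.exit]
  · exact (hs.mem_Ioo i hi₀ (by omega) t).2

theorem hasDerivAt (hs : IsPeriodicRFMSolution n T u x) {k : ℕ} (hk : k < n) (t : ℝ) :
    HasDerivAt (x (k + 1))
      (u k t * x k t * (1 - x (k + 1) t) - u (k + 1) t * (1 - x (k + 2) t) * x (k + 1) t) t :=
  (hs.differentiable (k + 1) (by omega) hk t).hasDerivAt.congr_deriv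
    (by rw [hs.deriv_eq (k + 1) (by omega) hk t, Nat.add_sub_cancel]; ring)

theorem continuous_rate_mul (hs : IsPeriodicRFMSolution n T u x) {i : ℕ} (hi : i ≤ n) :
    Continuous fun t => u i t * x i t :=
  (hs.continuous_rate i hi).mul (hs.continuous (by omega))

theorem continuous_rate_mul_one_sub (hs : IsPeriodicRFMSolution n T u x) {i : ℕ} (hi : i ≤ n) :
    Continuous fun t => u i t * (1 - x (i + 1) t) :=
  (hs.continuous_rate i hi).mul (continuous_const.sub (hs.continuous (by omega)))

theorem periodic_zero (hs : IsPeriodicRFMSolution n T u x) {i : ℕ} (hi₀ : 1 ≤ i) (hi : i ≤ n) :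
    x i T = x i 0 := by
  simpa only [zero_add] using hs.periodic i hi₀ hi 0

theorem integral_flux_eq (hs : IsPeriodicRFMSolution n T u x) {i : ℕ} (hi : i ≤ n) :
    ∫ t in (0:ℝ)..T, u i t * x i t * (1 - x (i + 1) t) = ∫ t in (0:ℝ)..T, u n t * x n t := by
  rw [apply_eq_of_forall_lt_apply_eq_apply_succ (F := fun i => ∫ t in (0:ℝ)..T,
    u i t * x i t * (1 - x (i + 1) t)) (fun k hk => ?_) hi]
  · simp only [hs.exit, sub_zero, mul_one]
  · refine (integral_mul_one_sub_eq_integral_mul (hs.continuous_rate_mul hk.le)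
      (hs.continuous_rate_mul_one_sub hk) (hs.hasDerivAt hk) (hs.periodic_zero (by omega) hk)).trans
      (integral_congr fun t _ => by ring)

theorem flux_mul_add_lt_mul (hs : IsPeriodicRFMSolution n T u x) (hT : 0 < T) {k : ℕ}
    (hk : k < n) (hnc : ¬ ∃ c, ∀ t, x (k + 1) t = c) :
    (∫ t in (0:ℝ)..T, u n t * x n t) *
        ((∫ t in (0:ℝ)..T, u k t * x k t) + ∫ t in (0:ℝ)..T, u (k + 1) t * (1 - x (k + 2) t))
      < (∫ t in (0:ℝ)..T, u k t * x k t) * ∫ t in (0:ℝ)..T, u (k + 1) t * (1 - x (k + 2) t) := by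
  rw [← hs.integral_flux_eq hk.le]
  refine integral_mul_one_sub_mul_add_lt hT (hs.continuous_rate_mul hk.le)
    (hs.continuous_rate_mul_one_sub hk)
    (fun t _ => add_pos (mul_pos (hs.rate_pos k hk.le t) (hs.pos hk.le t))
      (mul_pos (hs.rate_pos (k + 1) hk t) (sub_pos.2 (hs.lt_one (by omega) (by omega) t))))
    (hs.hasDerivAt hk) (hs.periodic_zero (by omega) hk)
    ((hs.periodic (k + 1) (by omega) hk).exists_mem_Icc_ne hT hnc)

theorem equilibrium_lt_integral_rate_mul (hs : IsPeriodicRFMSolution n T u x)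
    (he : IsAveragedEquilibrium n T u e) (hT : 0 < T) {k : ℕ} (hk : k < n)
    (hnc : ¬ ∃ c, ∀ t, x (k + 1) t = c)
    (hflux : (∫ t in (0:ℝ)..T, u n t) * e n ≤ ∫ t in (0:ℝ)..T, u n t * x n t)
    (hout : ∫ t in (0:ℝ)..T, u (k + 1) t * (1 - x (k + 2) t)
      ≤ (∫ t in (0:ℝ)..T, u (k + 1) t) * (1 - e (k + 2))) :
    (∫ t in (0:ℝ)..T, u k t) * e k < ∫ t in (0:ℝ)..T, u k t * x k t := by
  have hpos : ∀ f : ℝ → ℝ, Continuous f → (∀ t, 0 < f t) → 0 < ∫ t in (0:ℝ)..T, f t :=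
    fun f hf hf_pos => intervalIntegral_pos_of_pos_on (hf.intervalIntegrable _ _)
      (fun t _ => hf_pos t) hT
  have hU : ∀ i ≤ n, 0 < ∫ t in (0:ℝ)..T, u i t :=
    fun i hi => hpos _ (hs.continuous_rate i hi) (hs.rate_pos i hi)
  refine lt_of_mul_add_lt_mul_of_mul_add_eq_mul
    (hpos _ (hs.continuous_rate_mul hk.le)
      fun t => mul_pos (hs.rate_pos k hk.le t) (hs.pos hk.le t))
    (hpos _ (hs.continuous_rate_mul_one_sub hk)
      fun t => mul_pos (hs.rate_pos (k + 1) hk t) (sub_pos.2 (hs.lt_one (by omega) (by omega) t)))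
    (mul_pos (hU k hk.le) (he.pos hk.le))
    (mul_pos (hU (k + 1) hk) (sub_pos.2 (he.lt_one (by omega) (by omega))))
    hflux hout (hs.flux_mul_add_lt_mul hT hk hnc) ?_
  have h₁ := he.integral_flux_eq hT.ne' hk.le
  have h₂ : (∫ t in (0:ℝ)..T, u (k + 1) t) * e (k + 1) * (1 - e (k + 2))
      = (∫ t in (0:ℝ)..T, u n t) * e n := he.integral_flux_eq hT.ne' hk
  linear_combination (-((∫ t in (0:ℝ)..T, u (k + 1) t) * (1 - e (k + 2)))) * h₁
    - (∫ t in (0:ℝ)..T, u k t) * e k * h₂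

theorem equilibrium_lt_integral_rate_mul_two_mul {m : ℕ}
    (hs : IsPeriodicRFMSolution (2 * m + 1) T u x) (he : IsAveragedEquilibrium (2 * m + 1) T u e)
    (hT : 0 < T)
    (hprop : ∀ i, Odd i → i ≤ 2 * m + 1 - 2 → ∃ α : ℝ, 0 < α ∧ ∀ t, u i t = α * u (i + 1) t)
    (hnondeg : ∀ i, 1 ≤ i → i ≤ 2 * m + 1 → ¬ ∃ c : ℝ, ∀ t, x i t = c)
    (hflux : (∫ t in (0:ℝ)..T, u (2 * m + 1) t) * e (2 * m + 1)
      ≤ ∫ t in (0:ℝ)..T, u (2 * m + 1) t * x (2 * m + 1) t)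
    {k : ℕ} (hk : k ≤ m) :
    (∫ t in (0:ℝ)..T, u (2 * k) t) * e (2 * k) < ∫ t in (0:ℝ)..T, u (2 * k) t * x (2 * k) t := by
  induction hk using Nat.decreasingInduction with
  | self =>
    refine hs.equilibrium_lt_integral_rate_mul he hT (by omega)
      (hnondeg _ (by omega) le_rfl) hflux (le_of_eq ?_)
    simp only [hs.exit, he.exit, sub_zero, mul_one]
  | of_succ k hk ih =>
    obtain ⟨α, hα, hu⟩ := hprop (2 * k + 1) ⟨k, rfl⟩ (by omega)
    exact hs.equilibrium_lt_integral_rate_mul he hT (by omega)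
      (hnondeg _ (by omega) (by omega)) hflux
      (integral_mul_one_sub_le_of_eq_const_mul hα.le hu
        ((hs.continuous_rate _ (by omega)).intervalIntegrable _ _)
        ((hs.continuous_rate_mul (by omega)).intervalIntegrable _ _) ih.le)

end IsPeriodicRFMSolution

theorem rfm_strict_no_goe_nondegenerate_general
    (n : ℕ) (T : ℝ) (hT : 0 < T)
    (u : ℕ → ℝ → ℝ) (x : ℕ → ℝ → ℝ) (e : ℕ → ℝ)
    (hu_cont : ∀ i, i ≤ n → Continuous (u i))
    (hu_pos : ∀ i, i ≤ n → ∀ t, 0 < u i t)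
    (hx0 : ∀ t, x 0 t = 1) (hxtop : ∀ t, x (n+1) t = 0)
    (hxdiff : ∀ i, 1 ≤ i → i ≤ n → Differentiable ℝ (x i))
    (hxper : ∀ i, 1 ≤ i → i ≤ n → ∀ t, x i (t + T) = x i t)
    (hxmem : ∀ i, 1 ≤ i → i ≤ n → ∀ t, x i t ∈ Set.Ioo (0:ℝ) 1)
    (hode : ∀ i, 1 ≤ i → i ≤ n → ∀ t,
      deriv (x i) t
        = u (i-1) t * x (i-1) t * (1 - x i t) - u i t * x i t * (1 - x (i+1) t))
    (he0 : e 0 = 1) (hetop : e (n+1) = 0)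
    (hemem : ∀ i, 1 ≤ i → i ≤ n → e i ∈ Set.Ioo (0:ℝ) 1)
    (heq : ∀ i, 1 ≤ i → i ≤ n →
      (1/T * ∫ t in (0:ℝ)..T, u (i-1) t) * e (i-1) * (1 - e i)
        = (1/T * ∫ t in (0:ℝ)..T, u i t) * e i * (1 - e (i+1)))
    (hodd : Odd n)
    (hprop : ∀ i, Odd i → i ≤ n - 2 →
      ∃ α : ℝ, 0 < α ∧ ∀ t, u i t = α * u (i+1) t)
    (hnondeg : ∀ i, 1 ≤ i → i ≤ n → ¬ ∃ c : ℝ, ∀ t, x i t = c) :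
    1/T * ∫ t in (0:ℝ)..T, u n t * x n t < (1/T * ∫ t in (0:ℝ)..T, u n t) * e n := by
  obtain ⟨m, rfl⟩ := hodd
  have hs : IsPeriodicRFMSolution (2 * m + 1) T u x :=
    ⟨hu_cont, hu_pos, hx0, hxtop, hxdiff, hxper, hxmem, hode⟩
  have he : IsAveragedEquilibrium (2 * m + 1) T u e := ⟨he0, hetop, hemem, heq⟩
  rw [mul_assoc, mul_lt_mul_iff_right₀ (one_div_pos.2 hT)]
  by_contra! hflux
  have h₀ := hs.equilibrium_lt_integral_rate_mul_two_mul he hT hprop hnondeg hflux m.zero_le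
  simp [hx0, he0] at h₀

theorem rfm_strict_no_goe_nondegenerate
    (n : ℕ) (hn : 1 ≤ n) (T : ℝ) (hT : 0 < T)
    (u : ℕ → ℝ → ℝ) (x : ℕ → ℝ → ℝ) (e : ℕ → ℝ)
    (hu_cont : ∀ i, i ≤ n → Continuous (u i))
    (hu_pos : ∀ i, i ≤ n → ∀ t, 0 < u i t)
    (hu_per : ∀ i, i ≤ n → ∀ t, u i (t + T) = u i t)
    (hx0 : ∀ t, x 0 t = 1) (hxtop : ∀ t, x (n+1) t = 0)
    (hxdiff : ∀ i, 1 ≤ i → i ≤ n → Differentiable ℝ (x i))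
    (hxper : ∀ i, 1 ≤ i → i ≤ n → ∀ t, x i (t + T) = x i t)
    (hxmem : ∀ i, 1 ≤ i → i ≤ n → ∀ t, x i t ∈ Set.Ioo (0:ℝ) 1)
    (hode : ∀ i, 1 ≤ i → i ≤ n → ∀ t,
      deriv (x i) t
        = u (i-1) t * x (i-1) t * (1 - x i t) - u i t * x i t * (1 - x (i+1) t))
    (he0 : e 0 = 1) (hetop : e (n+1) = 0)
    (hemem : ∀ i, 1 ≤ i → i ≤ n → e i ∈ Set.Ioo (0:ℝ) 1)
    (heq : ∀ i, 1 ≤ i → i ≤ n →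
      (1/T * ∫ t in (0:ℝ)..T, u (i-1) t) * e (i-1) * (1 - e i)
        = (1/T * ∫ t in (0:ℝ)..T, u i t) * e i * (1 - e (i+1)))
    (hodd : Odd n)
    (hprop : ∀ i, Odd i → i ≤ n - 2 →
      ∃ α : ℝ, 0 < α ∧ ∀ t, u i t = α * u (i+1) t)
    (hnondeg : ∀ i, 1 ≤ i → i ≤ n → ¬ ∃ c : ℝ, ∀ t, x i t = c) :
    1/T * ∫ t in (0:ℝ)..T, u n t * x n t < (1/T * ∫ t in (0:ℝ)..T, u n t) * e n :=
  rfm_strict_no_goe_nondegenerate_general n T hT u x e hu_cont hu_pos hx0 hxtop hxdiff hxper hxmem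
    hode he0 hetop hemem heq hodd hprop hnondeg
end

section
/- Consider the 2-site RFM ẋ₁ = u₀(1-x₁) - u₁x₁(1-x₂), ẋ₂ = u₁x₁(1-x₂) - u₂x₂ with continuous positive T-periodic rates where u₁ and u₂ are constant: u₁(t) ≡ ū₁, u₂(t) ≡ ū₂. Let x be the T-periodic solution in (0,1)², e the averaged equilibrium, and zᵢ = xᵢ - eᵢ. Then (1/T)∫₀ᵀ z₂ dt ≤ 0, and there is no gain of entrainment: R_P ≤ R_C. -/
/-!
Integrating the two equations over a period gives two balance laws: the flux `c₁ x₁ (1 - x₂)`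
averages to `c₂ x̄₂`, and, since `d/dt (-log (1 - x₁)) = u₀ - c₁ x₁ (1 - x₂) / (1 - x₁)`, the
mean of `u₀` is the mean of `c₁ x₁ (1 - x₂) / (1 - x₁)`. The tangent line of the convex map
`a ↦ a / (1 - a)` at `e₁`, weighted by `1 - x₂ ≥ 0`, bounds this last integrand from below by an
expression that is affine in the flux and in `x₂`. Combining the three relations with the
equilibrium equations leaves `(1 - e₂ + e₁ e₂) x̄₂ ≤ (1 - e₂ + e₁ e₂) e₂`.
-/

open MeasureTheory intervalIntegral Real Filter

theorem Function.Periodic.integral_eq_of_hasDerivAt_sub {f g h : ℝ → ℝ} {T : ℝ}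
    (hf : Function.Periodic f T) (hderiv : ∀ t, HasDerivAt f (g t - h t) t)
    (hg : Continuous g) (hh : Continuous h) :
    ∫ t in (0:ℝ)..T, g t = ∫ t in (0:ℝ)..T, h t := by
  have hftc := integral_eq_sub_of_hasDerivAt (fun t _ => hderiv t)
    ((hg.sub hh).intervalIntegrable 0 T)
  rwa [integral_sub (hg.intervalIntegrable 0 T) (hh.intervalIntegrable 0 T),
    show f T = f 0 by simpa using hf 0, sub_self, sub_eq_zero] at hftc

theorem Function.Periodic.integral_eq_integral_div_one_sub {x a b : ℝ → ℝ} {T : ℝ}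
    (hx : Function.Periodic x T) (hxd : Differentiable ℝ x) (hx1 : ∀ t, x t < 1)
    (hode : ∀ t, deriv x t = a t * (1 - x t) - b t) (ha : Continuous a) (hb : Continuous b) :
    ∫ t in (0:ℝ)..T, a t = ∫ t in (0:ℝ)..T, b t / (1 - x t) := by
  have hne : ∀ t, 1 - x t ≠ 0 := fun t => (sub_pos.2 (hx1 t)).ne'
  refine Function.Periodic.integral_eq_of_hasDerivAt_sub (f := fun t => -log (1 - x t))
    (fun t => by simp only [hx t]) (fun t => ?_) ha
    (hb.div (continuous_const.sub hxd.continuous) hne)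
  refine (((hxd t).hasDerivAt.const_sub 1).log (hne t)).neg.congr_deriv ?_
  rw [hode t]
  field_simp [hne t]

/-- Tangent line of the convex map `a ↦ a / (1 - a)` at `e`, multiplied by `(1 - e) ^ 2`. -/
theorem sub_sq_le_sq_mul_div_one_sub {a : ℝ} (e : ℝ) (ha : a < 1) :
    a - e ^ 2 ≤ (1 - e) ^ 2 * (a / (1 - a)) := by
  have hpos : 0 < 1 - a := sub_pos.2 ha
  have hgap : (1 - e) ^ 2 * (a / (1 - a)) - (a - e ^ 2) = (a - e) ^ 2 / (1 - a) := by
    field_simp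
    ring
  linarith [div_nonneg (sq_nonneg (a - e)) hpos.le]

theorem integral_mul_one_sub_sub_le {x y : ℝ → ℝ} {T : ℝ} (e : ℝ) (hT : 0 ≤ T)
    (hxc : Continuous x) (hyc : Continuous y) (hx : ∀ t, x t < 1) (hy : ∀ t, y t ≤ 1) :
    (∫ t in (0:ℝ)..T, x t * (1 - y t)) - e ^ 2 * (T - ∫ t in (0:ℝ)..T, y t)
      ≤ (1 - e) ^ 2 * ∫ t in (0:ℝ)..T, x t * (1 - y t) / (1 - x t) := by
  have hflux : Continuous fun t => x t * (1 - y t) := by fun_prop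
  have hweight : Continuous fun t => e ^ 2 * (1 - y t) := by fun_prop
  have hratio : Continuous fun t => x t * (1 - y t) / (1 - x t) :=
    hflux.div (continuous_const.sub hxc) fun t => (sub_pos.2 (hx t)).ne'
  have hpointwise : ∀ t, x t * (1 - y t) - e ^ 2 * (1 - y t)
      ≤ (1 - e) ^ 2 * (x t * (1 - y t) / (1 - x t)) := fun t => by
    have := mul_le_mul_of_nonneg_right (sub_sq_le_sq_mul_div_one_sub e (hx t))
      (sub_nonneg.2 (hy t))
    linarith [show (1 - e) ^ 2 * (x t / (1 - x t)) * (1 - y t)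
      = (1 - e) ^ 2 * (x t * (1 - y t) / (1 - x t)) by ring]
  calc (∫ t in (0:ℝ)..T, x t * (1 - y t)) - e ^ 2 * (T - ∫ t in (0:ℝ)..T, y t)
      = ∫ t in (0:ℝ)..T, (x t * (1 - y t) - e ^ 2 * (1 - y t)) := by
        rw [integral_sub (hflux.intervalIntegrable 0 T) (hweight.intervalIntegrable 0 T),
          intervalIntegral.integral_const_mul, integral_sub intervalIntegrable_const
            (hyc.intervalIntegrable 0 T), intervalIntegral.integral_const, smul_eq_mul, mul_one,
          sub_zero]
    _ ≤ ∫ t in (0:ℝ)..T, (1 - e) ^ 2 * (x t * (1 - y t) / (1 - x t)) :=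
        integral_mono_on hT ((hflux.sub hweight).intervalIntegrable 0 T)
          ((continuous_const.mul hratio).intervalIntegrable 0 T) fun t _ => hpointwise t
    _ = (1 - e) ^ 2 * ∫ t in (0:ℝ)..T, x t * (1 - y t) / (1 - x t) :=
        intervalIntegral.integral_const_mul _ _

theorem le_mul_of_rfm2_balance {c₁ c₂ e₁ e₂ T I J Q : ℝ} (hc₁ : 0 < c₁) (he₁ : 0 < e₁)
    (he₂ : e₂ ∈ Set.Ioo (0:ℝ) 1) (hflux : c₁ * J = c₂ * I)
    (hinflow : c₁ * Q * (1 - e₁) = c₁ * e₁ * (1 - e₂) * T)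
    (htangent : J - e₁ ^ 2 * (T - I) ≤ (1 - e₁) ^ 2 * Q)
    (hequil : c₁ * e₁ * (1 - e₂) = c₂ * e₂) :
    I ≤ e₂ * T := by
  obtain ⟨he₂0, he₂1⟩ := he₂
  have hfactor : 0 < 1 - e₂ + e₁ * e₂ := by nlinarith
  have hscaled :
      c₁ * e₁ * ((1 - e₂ + e₁ * e₂) * I) ≤ c₁ * e₁ * ((1 - e₂ + e₁ * e₂) * (e₂ * T)) := by
    linear_combination (e₂ * c₁) * htangent - e₂ * hflux + I * hequil + e₂ * (1 - e₁) * hinflow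
  exact le_of_mul_le_mul_left (le_of_mul_le_mul_left hscaled (mul_pos hc₁ he₁)) hfactor

theorem rfm2_constant_internal_no_goe_general
    (T : ℝ) (hT : 0 < T)
    (u0 : ℝ → ℝ) (c1 c2 : ℝ) (hc1 : 0 < c1) (hc2 : 0 < c2)
    (hu0c : Continuous u0)
    (x1 x2 : ℝ → ℝ)
    (hx1d : Differentiable ℝ x1) (hx2d : Differentiable ℝ x2)
    (hx1per : ∀ t, x1 (t + T) = x1 t) (hx2per : ∀ t, x2 (t + T) = x2 t)
    (hx1mem : ∀ t, x1 t ∈ Set.Ioo (0:ℝ) 1) (hx2mem : ∀ t, x2 t ∈ Set.Ioo (0:ℝ) 1)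
    (hode1 : ∀ t, deriv x1 t = u0 t * (1 - x1 t) - c1 * x1 t * (1 - x2 t))
    (hode2 : ∀ t, deriv x2 t = c1 * x1 t * (1 - x2 t) - c2 * x2 t)
    (e1 e2 : ℝ) (he1 : e1 ∈ Set.Ioo (0:ℝ) 1) (he2 : e2 ∈ Set.Ioo (0:ℝ) 1)
    (heq1 : (1/T * ∫ t in (0:ℝ)..T, u0 t) * (1 - e1) = c1 * e1 * (1 - e2))
    (heq2 : c1 * e1 * (1 - e2) = c2 * e2) :
    (1/T * ∫ t in (0:ℝ)..T, (x2 t - e2)) ≤ 0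
    ∧ 1/T * ∫ t in (0:ℝ)..T, c2 * x2 t ≤ c2 * e2 := by
  have hx1c := hx1d.continuous
  have hx2c := hx2d.continuous
  have hflux : c1 * ∫ t in (0:ℝ)..T, x1 t * (1 - x2 t) = c2 * ∫ t in (0:ℝ)..T, x2 t := by
    have := Function.Periodic.integral_eq_of_hasDerivAt_sub
      (g := fun t => c1 * x1 t * (1 - x2 t)) (h := fun t => c2 * x2 t) hx2per
      (fun t => hode2 t ▸ (hx2d t).hasDerivAt) (by fun_prop) (by fun_prop)
    simpa only [mul_assoc, intervalIntegral.integral_const_mul] using this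
  have hinflow : ∫ t in (0:ℝ)..T, u0 t
      = c1 * ∫ t in (0:ℝ)..T, x1 t * (1 - x2 t) / (1 - x1 t) := by
    have := Function.Periodic.integral_eq_integral_div_one_sub hx1per hx1d
      (fun t => (hx1mem t).2) hode1 hu0c (by fun_prop)
    simpa only [mul_assoc, mul_div_assoc, intervalIntegral.integral_const_mul] using this
  have htangent := integral_mul_one_sub_sub_le e1 hT.le hx1c hx2c
    (fun t => (hx1mem t).2) (fun t => (hx2mem t).2.le)
  rw [hinflow] at heq1
  have hmean := le_mul_of_rfm2_balance hc1 he1.1 he2 hflux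
    (by rw [← heq1]; field_simp) htangent heq2
  constructor
  · rw [integral_sub (hx2c.intervalIntegrable 0 T) intervalIntegrable_const,
      intervalIntegral.integral_const, smul_eq_mul, sub_zero]
    exact mul_nonpos_of_nonneg_of_nonpos (by positivity) (by linarith)
  · rw [intervalIntegral.integral_const_mul, div_mul_eq_mul_div, one_mul, div_le_iff₀ hT,
      mul_assoc]
    exact mul_le_mul_of_nonneg_left hmean hc2.le

theorem rfm2_constant_internal_no_goe
    (T : ℝ) (hT : 0 < T)
    (u0 : ℝ → ℝ) (c1 c2 : ℝ) (hc1 : 0 < c1) (hc2 : 0 < c2)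
    (hu0c : Continuous u0) (hu0p : ∀ t, 0 < u0 t) (hu0per : ∀ t, u0 (t + T) = u0 t)
    (x1 x2 : ℝ → ℝ)
    (hx1d : Differentiable ℝ x1) (hx2d : Differentiable ℝ x2)
    (hx1per : ∀ t, x1 (t + T) = x1 t) (hx2per : ∀ t, x2 (t + T) = x2 t)
    (hx1mem : ∀ t, x1 t ∈ Set.Ioo (0:ℝ) 1) (hx2mem : ∀ t, x2 t ∈ Set.Ioo (0:ℝ) 1)
    (hode1 : ∀ t, deriv x1 t = u0 t * (1 - x1 t) - c1 * x1 t * (1 - x2 t))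
    (hode2 : ∀ t, deriv x2 t = c1 * x1 t * (1 - x2 t) - c2 * x2 t)
    (e1 e2 : ℝ) (he1 : e1 ∈ Set.Ioo (0:ℝ) 1) (he2 : e2 ∈ Set.Ioo (0:ℝ) 1)
    (heq1 : (1/T * ∫ t in (0:ℝ)..T, u0 t) * (1 - e1) = c1 * e1 * (1 - e2))
    (heq2 : c1 * e1 * (1 - e2) = c2 * e2) :
    (1/T * ∫ t in (0:ℝ)..T, (x2 t - e2)) ≤ 0
    ∧ 1/T * ∫ t in (0:ℝ)..T, c2 * x2 t ≤ c2 * e2 :=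
  rfm2_constant_internal_no_goe_general T hT u0 c1 c2 hc1 hc2 hu0c x1 x2 hx1d hx2d hx1per hx2per
    hx1mem hx2mem hode1 hode2 e1 e2 he1 he2 heq1 heq2
end
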